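/- arXiv:2107.02797 — 2 statements merged into one kernel-verified Lean document; each statement's English description precedes it below -/
import Mathlib

section
/- Suppose D(u,w) = |u − w|² and y is bounded. Let û ∈ U be the minimizer of L^Tik over the linear space U and let φ̂ ∈ V be a δ-minimizer of L^Tik over V. Suppose (approximation assumption) there exists ψ ∈ V with ‖ψ − û‖²_{H¹(ρ)} ≤ A² for some A ≥ 0. Then ‖φ̂ − û‖²_{H¹(ρ)} ≤ A² + δ. -/
open MeasureTheory

noncomputable section

section GradHelpers

variable {F : Type*} [NormedAddCommGroup F] [InnerProductSpace ℝ F] [CompleteSpace F]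

theorem gradient_add'' {f g : F → ℝ} {x : F} (hf : DifferentiableAt ℝ f x)
    (hg : DifferentiableAt ℝ g x) :
    gradient (f + g) x = gradient f x + gradient g x := by
  simp only [gradient, fderiv_add hf hg, map_add]

theorem gradient_sub'' {f g : F → ℝ} {x : F} (hf : DifferentiableAt ℝ f x)
    (hg : DifferentiableAt ℝ g x) :
    gradient (f - g) x = gradient f x - gradient g x := by
  simp only [gradient, fderiv_sub hf hg, map_sub]

theorem gradient_const_smul'' {f : F → ℝ} {x : F} (hf : DifferentiableAt ℝ f x) (c : ℝ) :
    gradient (c • f) x = c • gradient f x := by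
  rw [gradient, gradient, fderiv_const_smul hf c]
  exact (InnerProductSpace.toDual ℝ F).symm.map_smul c _

end GradHelpers

/-- The Tikhonov-regularized expected loss with quadratic data term:
`L^Tik(u) = E_ρ[|u(x) - y(x)|² + |∇u(x)|²]`. -/
def LTik {d : ℕ} (ρ : Measure (EuclideanSpace ℝ (Fin d)))
    (y : EuclideanSpace ℝ (Fin d) → ℝ)
    (u : EuclideanSpace ℝ (Fin d) → ℝ) : ℝ :=
  ∫ x, ((u x - y x) ^ 2 + ‖gradient u x‖ ^ 2) ∂ρ

/-- Squared weighted `H¹(ρ)` distance: `E_ρ[|u-v|² + |∇u-∇v|²]`. -/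
def H1distSq {d : ℕ} (ρ : Measure (EuclideanSpace ℝ (Fin d)))
    (u v : EuclideanSpace ℝ (Fin d) → ℝ) : ℝ :=
  ∫ x, ((u x - v x) ^ 2 + ‖gradient u x - gradient v x‖ ^ 2) ∂ρ

theorem stmt4 {d : ℕ}
    (Ω : Set (EuclideanSpace ℝ (Fin d)))
    (ρ : Measure (EuclideanSpace ℝ (Fin d))) [IsProbabilityMeasure ρ]
    (hρΩ : ρ Ωᶜ = 0)
    -- `y` is bounded and measurable
    (y : EuclideanSpace ℝ (Fin d) → ℝ) (hy : Measurable y)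
    (Y : ℝ) (hybdd : ∀ x, |y x| ≤ Y)
    -- `U` is a linear space of differentiable functions, `V ⊆ U`
    (U V : Set (EuclideanSpace ℝ (Fin d) → ℝ))
    (hVU : V ⊆ U) (hUdiff : ∀ u ∈ U, Differentiable ℝ u)
    (hUadd : ∀ u ∈ U, ∀ v ∈ U, u + v ∈ U)
    (hUsmul : ∀ (c : ℝ), ∀ u ∈ U, c • u ∈ U)
    -- all expectations appearing are assumed finite
    (hIntD : ∀ u ∈ U, Integrable (fun x => (u x - y x) ^ 2 + ‖gradient u x‖ ^ 2) ρ)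
    (hIntH : ∀ u ∈ U, ∀ v ∈ U,
      Integrable (fun x => (u x - v x) ^ 2 + ‖gradient u x - gradient v x‖ ^ 2) ρ)
    -- `û` is a minimizer of `L^Tik` over `U`
    (uhat : EuclideanSpace ℝ (Fin d) → ℝ)
    (huhatU : uhat ∈ U) (huhatMin : ∀ u ∈ U, LTik ρ y uhat ≤ LTik ρ y u)
    -- `φ̂` is a `δ`-minimizer of `L^Tik` over `V`
    (δ : ℝ) (hδ : 0 ≤ δ)
    (φhat : EuclideanSpace ℝ (Fin d) → ℝ)
    (hφV : φhat ∈ V) (hφMin : ∀ φ ∈ V, LTik ρ y φhat ≤ LTik ρ y φ + δ)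
    -- approximation assumption
    (A : ℝ) (hA : 0 ≤ A)
    (happrox : ∃ ψ ∈ V, H1distSq ρ ψ uhat ≤ A ^ 2) :
    H1distSq ρ φhat uhat ≤ A ^ 2 + δ := by
  obtain ⟨ψ, hψV, hψ⟩ := happrox
  have huhatd := hUdiff uhat huhatU
  -- Key identity: for every u ∈ U, L(u) = L(û) + ‖u - û‖²_{H¹}
  have key : ∀ u ∈ U, LTik ρ y u = LTik ρ y uhat + H1distSq ρ u uhat := by
    intro u hu
    have hud := hUdiff u hu
    set v : EuclideanSpace ℝ (Fin d) → ℝ := u - uhat with hv_def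
    have hvU : v ∈ U := by
      have h1 : u + (-1 : ℝ) • uhat ∈ U :=
        hUadd u hu _ (hUsmul (-1) uhat huhatU)
      have h2 : u + (-1 : ℝ) • uhat = v := by
        funext x; simp [hv_def, sub_eq_add_neg]
      rwa [h2] at h1
    have hvd := hUdiff v hvU
    have hgv : ∀ x, gradient v x = gradient u x - gradient uhat x := fun x =>
      gradient_sub'' (hud x) (huhatd x)
    set g : EuclideanSpace ℝ (Fin d) → ℝ :=
      fun x => (uhat x - y x) * v x + inner ℝ (gradient uhat x) (gradient v x) with hg_def
    set h : EuclideanSpace ℝ (Fin d) → ℝ :=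
      fun x => (v x) ^ 2 + ‖gradient v x‖ ^ 2 with hh_def
    -- pointwise expansion of the loss integrand along the segment û + t v
    have hw : ∀ t : ℝ, ∀ x,
        (((uhat + t • v) x - y x) ^ 2 + ‖gradient (uhat + t • v) x‖ ^ 2)
          = ((uhat x - y x) ^ 2 + ‖gradient uhat x‖ ^ 2) + (2 * t) * g x + t ^ 2 * h x := by
      intro t x
      have hgrad : gradient (uhat + t • v) x = gradient uhat x + t • gradient v x := by
        have hsvd : DifferentiableAt ℝ (t • v) x := (hvd x).const_smul t
        rw [gradient_add'' (huhatd x) hsvd, gradient_const_smul'' (hvd x) t]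
      rw [hgrad]
      have hnorm : ‖gradient uhat x + t • gradient v x‖ ^ 2
          = ‖gradient uhat x‖ ^ 2
            + 2 * (t * inner ℝ (gradient uhat x) (gradient v x))
            + t ^ 2 * ‖gradient v x‖ ^ 2 := by
        rw [norm_add_sq_real, real_inner_smul_right, norm_smul]
        simp [mul_pow, sq_abs]
      have happly : (uhat + t • v) x = uhat x + t * v x := by
        simp [Pi.add_apply, Pi.smul_apply, smul_eq_mul]
      rw [happly, hnorm, hg_def, hh_def]
      ring
    -- integrability facts
    have hI0 := hIntD uhat huhatU
    have hIu := hIntD u hu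
    have hIh : Integrable h ρ := by
      refine (hIntH u hu uhat huhatU).congr (Filter.Eventually.of_forall fun x => ?_)
      simp [hh_def, hgv x, hv_def, gradient_sub'' (hud x) (huhatd x)]
    have huv1 : uhat + (1 : ℝ) • v = u := by
      funext x; simp [hv_def]
    have hg_eq : ∀ x, g x = (1 / 2) * (((u x - y x) ^ 2 + ‖gradient u x‖ ^ 2)
        - ((uhat x - y x) ^ 2 + ‖gradient uhat x‖ ^ 2) - h x) := by
      intro x
      have := hw 1 x
      rw [huv1] at this
      linear_combination -this / 2
    have hIg : Integrable g ρ := by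
      have hI1 : Integrable (fun x => (1 / 2 : ℝ) *
          (((u x - y x) ^ 2 + ‖gradient u x‖ ^ 2)
            - ((uhat x - y x) ^ 2 + ‖gradient uhat x‖ ^ 2) - h x)) ρ :=
        ((hIu.sub hI0).sub hIh).const_mul (1 / 2)
      exact hI1.congr (Filter.Eventually.of_forall fun x => (hg_eq x).symm)
    set B := ∫ x, g x ∂ρ with hB_def
    set C := ∫ x, h x ∂ρ with hC_def
    have hC_eq : H1distSq ρ u uhat = C := by
      rw [H1distSq, hC_def]
      refine integral_congr_ae (Filter.Eventually.of_forall fun x => ?_)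
      simp [hh_def, hgv x, hv_def, gradient_sub'' (hud x) (huhatd x)]
    have hC0 : 0 ≤ C := by
      refine integral_nonneg fun x => ?_
      have : 0 ≤ (v x) ^ 2 + ‖gradient v x‖ ^ 2 := by positivity
      simpa [hh_def] using this
    -- value of the loss along the segment
    have hL : ∀ t : ℝ, LTik ρ y (uhat + t • v)
        = LTik ρ y uhat + (2 * t) * B + t ^ 2 * C := by
      intro t
      have hIa : Integrable (fun x => ((uhat x - y x) ^ 2 + ‖gradient uhat x‖ ^ 2)
          + (2 * t) * g x) ρ := hI0.add (hIg.const_mul (2 * t))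
      have hIb : Integrable (fun x => (2 * t) * g x) ρ := hIg.const_mul (2 * t)
      have hIc : Integrable (fun x => t ^ 2 * h x) ρ := hIh.const_mul (t ^ 2)
      rw [LTik, integral_congr_ae (Filter.Eventually.of_forall (hw t))]
      rw [integral_add hIa hIc, integral_add hI0 hIb,
        integral_const_mul, integral_const_mul]
      rfl
    have hwU : ∀ t : ℝ, uhat + t • v ∈ U := fun t =>
      hUadd uhat huhatU _ (hUsmul t v hvU)
    have hmin : ∀ t : ℝ, 0 ≤ 2 * t * B + t ^ 2 * C := by
      intro t
      have h1 := huhatMin _ (hwU t)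
      rw [hL t] at h1
      linarith
    have hB0 : B = 0 := by
      by_contra hB
      have hB2 : 0 < B ^ 2 := by positivity
      have hC1 : (0 : ℝ) < C + 1 := by linarith
      have h1 := hmin (-B / (C + 1))
      have h2 : 0 ≤ (2 * (-B / (C + 1)) * B + (-B / (C + 1)) ^ 2 * C) * (C + 1) ^ 2 :=
        mul_nonneg h1 (by positivity)
      have h3 : (2 * (-B / (C + 1)) * B + (-B / (C + 1)) ^ 2 * C) * (C + 1) ^ 2
          = -2 * B ^ 2 * (C + 1) + B ^ 2 * C := by
        field_simp
      rw [h3] at h2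
      nlinarith [mul_nonneg hB2.le hC0]
    have h1 := hL 1
    rw [huv1] at h1
    rw [h1, hB0, hC_eq]
    ring
  have k1 := key φhat (hVU hφV)
  have k2 := key ψ (hVU hψV)
  have h3 := hφMin ψ hψV
  linarith
end
end

section
/- Suppose D(u,w) = |u − w|² and y is bounded. Let û ∈ U be the minimizer of L^Tik over the linear space U. Suppose (approximation assumption) there exists ψ ∈ V with ‖ψ − û‖²_{H¹(ρ)} ≤ A² for some A ≥ 0, and suppose (quadrature assumption) for the i.i.d. sample x₁,…,x_N ∼ ρ there is an event E of probability at least 1−ε on which sup_{φ∈V} |L^Tik(φ) − L^Tik_N(φ)| ≤ Q for some Q ≥ 0. Then, on the event E, every δ-minimizer φ̂^N of L^Tik_N over V satisfies ‖φ̂^N − û‖²_{H¹(ρ)} ≤ A² + 2Q + 2δ; in particular this bound holds with probability at least 1−ε over the choice of the sample. -/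
open MeasureTheory
open RealInnerProductSpace

noncomputable section

open RealInnerProductSpace in
private lemma grad_add {d : ℕ} (f g : EuclideanSpace ℝ (Fin d) → ℝ)
    (hf : Differentiable ℝ f) (hg : Differentiable ℝ g) (x : EuclideanSpace ℝ (Fin d)) :
    gradient (f + g) x = gradient f x + gradient g x := by
  unfold gradient
  rw [show fderiv ℝ (f + g) x = fderiv ℝ f x + fderiv ℝ g x from
    fderiv_add (hf x) (hg x), map_add]

private lemma grad_smul {d : ℕ} (c : ℝ) (f : EuclideanSpace ℝ (Fin d) → ℝ)
    (hf : Differentiable ℝ f) (x : EuclideanSpace ℝ (Fin d)) :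
    gradient (c • f) x = c • gradient f x := by
  unfold gradient
  rw [show fderiv ℝ (c • f) x = c • fderiv ℝ f x from fderiv_const_smul (hf x) c,
    _root_.map_smul]


/-- The empirical Tikhonov-regularized loss built from the sample points `xs`. -/
def LTikN {d N : ℕ} (xs : Fin N → EuclideanSpace ℝ (Fin d))
    (y : EuclideanSpace ℝ (Fin d) → ℝ)
    (φ : EuclideanSpace ℝ (Fin d) → ℝ) : ℝ :=
  (N : ℝ)⁻¹ * ∑ i, ((φ (xs i) - y (xs i)) ^ 2 + ‖gradient φ (xs i)‖ ^ 2)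

theorem stmt5 {d : ℕ}
    (Ω : Set (EuclideanSpace ℝ (Fin d)))
    (ρ : Measure (EuclideanSpace ℝ (Fin d))) [IsProbabilityMeasure ρ]
    (hρΩ : ρ Ωᶜ = 0)
    -- `y` is bounded and measurable
    (y : EuclideanSpace ℝ (Fin d) → ℝ) (hy : Measurable y)
    (Y : ℝ) (hybdd : ∀ x, |y x| ≤ Y)
    -- `U` is a linear space of differentiable functions, `V ⊆ U`
    (U V : Set (EuclideanSpace ℝ (Fin d) → ℝ))
    (hVU : V ⊆ U) (hUdiff : ∀ u ∈ U, Differentiable ℝ u)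
    (hUadd : ∀ u ∈ U, ∀ v ∈ U, u + v ∈ U)
    (hUsmul : ∀ (c : ℝ), ∀ u ∈ U, c • u ∈ U)
    -- all expectations appearing are assumed finite
    (hIntD : ∀ u ∈ U, Integrable (fun x => (u x - y x) ^ 2 + ‖gradient u x‖ ^ 2) ρ)
    (hIntH : ∀ u ∈ U, ∀ v ∈ U,
      Integrable (fun x => (u x - v x) ^ 2 + ‖gradient u x - gradient v x‖ ^ 2) ρ)
    -- `û` is a minimizer of `L^Tik` over `U`
    (uhat : EuclideanSpace ℝ (Fin d) → ℝ)
    (huhatU : uhat ∈ U) (huhatMin : ∀ u ∈ U, LTik ρ y uhat ≤ LTik ρ y u)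
    -- approximation assumption
    (A : ℝ) (hA : 0 ≤ A)
    (happrox : ∃ ψ ∈ V, H1distSq ρ ψ uhat ≤ A ^ 2)
    -- quadrature assumption: on an event `E` of i.i.d. samples of probability at least
    -- `1 - ε`, the empirical loss is uniformly `Q`-close to the expected loss on `V`
    (N : ℕ) (hN : 0 < N) (ε : ℝ) (hε : 0 < ε) (hε1 : ε < 1)
    (Q : ℝ) (hQ : 0 ≤ Q)
    (E : Set (Fin N → EuclideanSpace ℝ (Fin d)))
    (hEprob : ENNReal.ofReal (1 - ε) ≤ Measure.pi (fun _ : Fin N => ρ) E)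
    (hEquad : ∀ xs ∈ E, ∀ φ ∈ V, |LTik ρ y φ - LTikN xs y φ| ≤ Q)
    (δ : ℝ) (hδ : 0 ≤ δ) :
    -- on the event `E`, every `δ`-minimizer of the empirical loss over `V`
    -- satisfies the bound …
    (∀ xs ∈ E, ∀ φN ∈ V, (∀ φ ∈ V, LTikN xs y φN ≤ LTikN xs y φ + δ) →
        H1distSq ρ φN uhat ≤ A ^ 2 + 2 * Q + 2 * δ) ∧
    -- … and in particular the bound holds with probability at least `1 - ε`
    ENNReal.ofReal (1 - ε) ≤ Measure.pi (fun _ : Fin N => ρ)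
      {xs | ∀ φN ∈ V, (∀ φ ∈ V, LTikN xs y φN ≤ LTikN xs y φ + δ) →
        H1distSq ρ φN uhat ≤ A ^ 2 + 2 * Q + 2 * δ} := by
  classical
  have key : ∀ w ∈ U,
      LTik ρ y (uhat + w) = LTik ρ y uhat
        + (∫ x, ((w x) ^ 2 + ‖gradient w x‖ ^ 2) ∂ρ)
        + 2 * ∫ x, ((uhat x - y x) * w x + ⟪gradient uhat x, gradient w x⟫) ∂ρ := by
    intro w hw
    have hwd := hUdiff w hw
    have hud := hUdiff uhat huhatU
    have haddU : uhat + w ∈ U := hUadd uhat huhatU w hw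
    have hgr : ∀ x, gradient (uhat + w) x = gradient uhat x + gradient w x :=
      grad_add uhat w hud hwd
    have hF1 : Integrable
        (fun x => ((uhat + w) x - y x) ^ 2 + ‖gradient (uhat + w) x‖ ^ 2) ρ :=
      hIntD _ haddU
    have hF2 := hIntD uhat huhatU
    have hF3 : Integrable (fun x => (w x) ^ 2 + ‖gradient w x‖ ^ 2) ρ := by
      refine (hIntH (uhat + w) haddU uhat huhatU).congr
        (Filter.Eventually.of_forall fun x => ?_)
      simp [hgr x, add_sub_cancel_left]
    have hcross : Integrable
        (fun x => (uhat x - y x) * w x + ⟪gradient uhat x, gradient w x⟫) ρ := by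
      refine (((hF1.sub hF2).sub hF3).div_const 2).congr
        (Filter.Eventually.of_forall fun x => ?_)
      simp only [Pi.sub_apply, Pi.add_apply, hgr x]
      rw [norm_add_sq_real]
      ring
    have hpt : ∀ x, ((uhat + w) x - y x) ^ 2 + ‖gradient (uhat + w) x‖ ^ 2
        = ((uhat x - y x) ^ 2 + ‖gradient uhat x‖ ^ 2)
          + (((w x) ^ 2 + ‖gradient w x‖ ^ 2)
          + 2 * ((uhat x - y x) * w x + ⟪gradient uhat x, gradient w x⟫)) := by
      intro x
      simp only [Pi.add_apply, hgr x]
      rw [norm_add_sq_real]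
      ring
    have hsum : Integrable (fun x => ((w x) ^ 2 + ‖gradient w x‖ ^ 2)
        + 2 * ((uhat x - y x) * w x + ⟪gradient uhat x, gradient w x⟫)) ρ :=
      hF3.add (hcross.const_mul 2)
    unfold LTik
    rw [integral_congr_ae (Filter.Eventually.of_forall fun x => hpt x),
      integral_add hF2 hsum, integral_add hF3 (hcross.const_mul 2),
      integral_const_mul]
    ring
  have hquad : ∀ w ∈ U, ∀ t : ℝ,
      LTik ρ y (uhat + t • w) = LTik ρ y uhat
        + t ^ 2 * (∫ x, ((w x) ^ 2 + ‖gradient w x‖ ^ 2) ∂ρ)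
        + 2 * (t * ∫ x, ((uhat x - y x) * w x + ⟪gradient uhat x, gradient w x⟫) ∂ρ) := by
    intro w hw t
    have hwd := hUdiff w hw
    have hgs : ∀ x, gradient (t • w) x = t • gradient w x := grad_smul t w hwd
    have e1 : (∫ x, (((t • w) x) ^ 2 + ‖gradient (t • w) x‖ ^ 2) ∂ρ)
        = t ^ 2 * ∫ x, ((w x) ^ 2 + ‖gradient w x‖ ^ 2) ∂ρ := by
      rw [← integral_const_mul]
      refine integral_congr_ae (Filter.Eventually.of_forall fun x => ?_)
      simp only [Pi.smul_apply, smul_eq_mul, hgs x, norm_smul, Real.norm_eq_abs,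
        mul_pow, sq_abs]
      ring
    have e2 : (∫ x, ((uhat x - y x) * (t • w) x
          + ⟪gradient uhat x, gradient (t • w) x⟫) ∂ρ)
        = t * ∫ x, ((uhat x - y x) * w x + ⟪gradient uhat x, gradient w x⟫) ∂ρ := by
      rw [← integral_const_mul]
      refine integral_congr_ae (Filter.Eventually.of_forall fun x => ?_)
      simp only [Pi.smul_apply, smul_eq_mul, hgs x, real_inner_smul_right]
      ring
    rw [key (t • w) (hUsmul t w hw), e1, e2]
  have hC0 : ∀ w ∈ U,
      (∫ x, ((uhat x - y x) * w x + ⟪gradient uhat x, gradient w x⟫) ∂ρ) = 0 := by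
    intro w hw
    set P := ∫ x, ((w x) ^ 2 + ‖gradient w x‖ ^ 2) ∂ρ with hPdef
    set C := ∫ x, ((uhat x - y x) * w x + ⟪gradient uhat x, gradient w x⟫) ∂ρ with hCdef
    have hP : 0 ≤ P := integral_nonneg fun x => by positivity
    have hmin : ∀ t : ℝ, 0 ≤ t ^ 2 * P + 2 * (t * C) := by
      intro t
      have h1 := huhatMin (uhat + t • w) (hUadd uhat huhatU _ (hUsmul t w hw))
      have h2 := hquad w hw t
      linarith
    have hP1 : (0:ℝ) < P + 1 := by linarith
    have h := hmin (-C / (P + 1))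
    have h3 := mul_nonneg (le_of_lt (pow_pos hP1 2)) h
    have h4 : (P + 1) ^ 2 * ((-C / (P + 1)) ^ 2 * P + 2 * (-C / (P + 1) * C))
        = C ^ 2 * P - 2 * C ^ 2 * (P + 1) := by
      field_simp
      ring
    rw [h4] at h3
    have hCsq : C ^ 2 = 0 := le_antisymm (by nlinarith) (sq_nonneg C)
    exact pow_eq_zero_iff two_ne_zero |>.mp hCsq
  have hId : ∀ v ∈ U, H1distSq ρ v uhat = LTik ρ y v - LTik ρ y uhat := by
    intro v hv
    have hwU : v + (-1 : ℝ) • uhat ∈ U := hUadd v hv _ (hUsmul (-1) uhat huhatU)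
    set w := v + (-1 : ℝ) • uhat with hwdef
    have hvw : uhat + w = v := by funext x; simp [hwdef]
    have hk := key w hwU
    rw [hvw, hC0 w hwU] at hk
    have hgw : ∀ x, gradient w x = gradient v x - gradient uhat x := by
      intro x
      rw [hwdef, grad_add v _ (hUdiff v hv) (hUdiff _ (hUsmul (-1) uhat huhatU)),
        grad_smul (-1) uhat (hUdiff uhat huhatU)]
      simp
      abel
    have hH : H1distSq ρ v uhat = ∫ x, ((w x) ^ 2 + ‖gradient w x‖ ^ 2) ∂ρ := by
      unfold H1distSq
      refine integral_congr_ae (Filter.Eventually.of_forall fun x => ?_)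
      beta_reduce
      rw [hgw x]
      simp only [hwdef, Pi.add_apply, Pi.smul_apply, smul_eq_mul]
      ring
    rw [hH]
    linarith
  obtain ⟨ψ, hψV, hψA⟩ := happrox
  have main : ∀ xs ∈ E, ∀ φN ∈ V, (∀ φ ∈ V, LTikN xs y φN ≤ LTikN xs y φ + δ) →
      H1distSq ρ φN uhat ≤ A ^ 2 + 2 * Q + 2 * δ := by
    intro xs hxs φN hφN hδmin
    have h1 := hEquad xs hxs φN hφN
    have h2 := hEquad xs hxs ψ hψV
    have h3 := hδmin ψ hψV
    have e1 := hId φN (hVU hφN)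
    have e2 := hId ψ (hVU hψV)
    rw [abs_le] at h1 h2
    obtain ⟨h1a, h1b⟩ := h1
    obtain ⟨h2a, h2b⟩ := h2
    linarith
  exact ⟨main, le_trans hEprob (measure_mono fun xs hxs φN hφN hm =>
    main xs hxs φN hφN hm)⟩
end
end
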